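/- arXiv:2202.05946 — 6 statements merged into one kernel-verified Lean document; each statement's English description precedes it below -/
import Mathlib

section
/- Let g ∈ (1,2), γ ∈ [0,1), and ε ∈ (0, 1 - √((2-g)/g)). Then the quantity y = (1 + g + √((g-1)(g - 1 - εg + ε²g/2)))/(1-γ) is a well-defined real number (the expression under the square root is nonnegative), and moreover 2/(1-γ) < y < 2g/(1-γ). -/
/-!
The second factor of the radicand equals `(g (1 - ε)² - (2 - g)) / 2`. The bound
`ε < 1 - √((2 - g) / g)` says exactly that `g (1 - ε)² > 2 - g`, so the factor is positive,
and `0 < ε < 2` gives `(1 - ε)² < 1`, so the factor is below `g - 1`. Hence the square root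
lies in `[0, g - 1)`, which places `1 + g + √(…)` strictly between `2` and `2 g`.
-/

lemma radicand_factor_eq (g ε : ℝ) :
    g - 1 - ε * g + ε ^ 2 * g / 2 = (g * (1 - ε) ^ 2 - (2 - g)) / 2 := by
  ring

lemma radicand_factor_pos {g ε : ℝ} (hg : 0 < g) (hε : ε < 1 - √((2 - g) / g)) :
    0 < g - 1 - ε * g + ε ^ 2 * g / 2 := by
  have hsq : (2 - g) / g < (1 - ε) ^ 2 := Real.lt_sq_of_sqrt_lt (by linarith)
  have hgap : 2 - g < g * (1 - ε) ^ 2 := by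
    rwa [div_lt_iff₀ hg, mul_comm] at hsq
  rw [radicand_factor_eq]
  linarith

lemma radicand_factor_lt {g ε : ℝ} (hg : 0 < g) (hε₀ : 0 < ε) (hε₂ : ε < 2) :
    g - 1 - ε * g + ε ^ 2 * g / 2 < g - 1 := by
  have hsq : (1 - ε) ^ 2 < 1 := by nlinarith
  rw [radicand_factor_eq]
  nlinarith

lemma Real.sqrt_mul_lt_of_lt {a b : ℝ} (ha : 0 < a) (hb : b < a) : √(a * b) < a :=
  (Real.sqrt_lt' ha).mpr (by nlinarith)

theorem stmt_1 (g γ ε : ℝ)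
    (hg : g ∈ Set.Ioo (1 : ℝ) 2) (hγ : γ ∈ Set.Ico (0 : ℝ) 1)
    (hε : ε ∈ Set.Ioo (0 : ℝ) (1 - Real.sqrt ((2 - g) / g))) :
    0 ≤ (g - 1) * (g - 1 - ε * g + ε ^ 2 * g / 2) ∧
    2 / (1 - γ) <
      (1 + g + Real.sqrt ((g - 1) * (g - 1 - ε * g + ε ^ 2 * g / 2))) / (1 - γ) ∧
    (1 + g + Real.sqrt ((g - 1) * (g - 1 - ε * g + ε ^ 2 * g / 2))) / (1 - γ) <
      2 * g / (1 - γ) := by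
  obtain ⟨hg₁, -⟩ := hg
  obtain ⟨hε₀, hε₁⟩ := hε
  have hg₀ : 0 < g := by linarith
  have hε₂ : ε < 2 := by linarith [Real.sqrt_nonneg ((2 - g) / g)]
  have hden : 0 < 1 - γ := sub_pos.mpr hγ.2
  have hfactor := radicand_factor_pos hg₀ hε₁
  have hsqrt_lt := Real.sqrt_mul_lt_of_lt (sub_pos.mpr hg₁) (radicand_factor_lt hg₀ hε₀ hε₂)
  refine ⟨(mul_pos (sub_pos.mpr hg₁) hfactor).le, ?_, ?_⟩
  · refine div_lt_div_of_pos_right ?_ hden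
    linarith [Real.sqrt_nonneg ((g - 1) * (g - 1 - ε * g + ε ^ 2 * g / 2))]
  · exact div_lt_div_of_pos_right (by linarith) hden
end

section
/- Let f, h : [0,∞) → ℝ be continuously differentiable, and let U : ℝ × ℝ → ℝ be Lipschitz, strictly decreasing in its first argument and strictly increasing in its second. Let r_n, r_i : [0,∞) → ℝ be continuous with r_n(t) > r_i(t) for all t. Suppose f'(t) = U(f(t), r_n(t)) and h'(t) = U(h(t), r_i(t)) for all t. If f(t₀) = h(t₀) for some t₀ ≥ 0, then f(t) > h(t) for all t > t₀. -/
open Set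

section Barrier

variable {g g' : ℝ → ℝ} {a : ℝ}

theorem nonneg_of_deriv_pos_at_zeros (hg : ∀ x ∈ Ici a, HasDerivAt g (g' x) x)
    (ha : g a = 0) (hzero : ∀ x ∈ Ici a, g x = 0 → 0 < g' x) : ∀ x ∈ Ici a, 0 ≤ g x := by
  intro x hx
  have hcont : ContinuousOn g (Icc a x) := fun y hy =>
    (hg y hy.1).continuousAt.continuousWithinAt
  exact image_le_of_deriv_right_lt_deriv_boundary' continuousOn_const
    (fun _ _ => hasDerivWithinAt_const _ _ 0) ha.ge hcont
    (fun y hy => (hg y hy.1).hasDerivWithinAt) (fun y hy hy0 => hzero y hy.1 hy0.symm)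
    ⟨hx, le_rfl⟩

-- A later zero of the nonnegative `g` would be a local minimum, where `g'` vanishes.
theorem pos_of_deriv_pos_at_zeros (hg : ∀ x ∈ Ici a, HasDerivAt g (g' x) x)
    (ha : g a = 0) (hzero : ∀ x ∈ Ici a, g x = 0 → 0 < g' x) : ∀ x ∈ Ioi a, 0 < g x := by
  intro x hx
  have hnonneg := nonneg_of_deriv_pos_at_zeros hg ha hzero
  refine (hnonneg x (mem_Ici_of_Ioi hx)).lt_of_ne fun hx0 => ?_
  have hmin : IsLocalMin g x :=
    Filter.mem_of_superset (Ioi_mem_nhds hx) fun y hy => hx0 ▸ hnonneg y (mem_Ici_of_Ioi hy)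
  exact (hzero x (mem_Ici_of_Ioi hx) hx0.symm).ne'
    (hmin.hasDerivAt_eq_zero (hg x (mem_Ici_of_Ioi hx)))

end Barrier

theorem stmt_3_general (U : ℝ → ℝ → ℝ)
    (hU_mono : ∀ x : ℝ, StrictMono (fun y => U x y))
    (rn ri : ℝ → ℝ)
    (hr : ∀ t ≥ (0 : ℝ), rn t > ri t)
    (f h : ℝ → ℝ)
    (hf : ∀ t ≥ (0 : ℝ), HasDerivAt f (U (f t) (rn t)) t)
    (hh : ∀ t ≥ (0 : ℝ), HasDerivAt h (U (h t) (ri t)) t)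
    (t₀ : ℝ) (ht₀ : 0 ≤ t₀) (heq : f t₀ = h t₀) :
    ∀ t > t₀, f t > h t := by
  have hdiff : ∀ t ∈ Ici t₀,
      HasDerivAt (fun s => f s - h s) (U (f t) (rn t) - U (h t) (ri t)) t :=
    fun t ht => (hf t (ht₀.trans ht)).sub (hh t (ht₀.trans ht))
  have hcross : ∀ t ∈ Ici t₀, f t - h t = 0 → 0 < U (f t) (rn t) - U (h t) (ri t) := by
    intro t ht hft
    rw [sub_eq_zero.mp hft, sub_pos]
    exact hU_mono (h t) (hr t (ht₀.trans ht))
  intro t ht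
  exact sub_pos.mp (pos_of_deriv_pos_at_zeros hdiff (sub_eq_zero.mpr heq) hcross t ht)

theorem stmt_3 (U : ℝ → ℝ → ℝ) (K : NNReal)
    (hU_lip : LipschitzWith K (Function.uncurry U))
    (hU_anti : ∀ y : ℝ, StrictAnti (fun x => U x y))
    (hU_mono : ∀ x : ℝ, StrictMono (fun y => U x y))
    (rn ri : ℝ → ℝ)
    (hrn : ContinuousOn rn (Set.Ici 0)) (hri : ContinuousOn ri (Set.Ici 0))
    (hr : ∀ t ≥ (0 : ℝ), rn t > ri t)
    (f h : ℝ → ℝ)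
    (hf : ∀ t ≥ (0 : ℝ), HasDerivAt f (U (f t) (rn t)) t)
    (hh : ∀ t ≥ (0 : ℝ), HasDerivAt h (U (h t) (ri t)) t)
    (t₀ : ℝ) (ht₀ : 0 ≤ t₀) (heq : f t₀ = h t₀) :
    ∀ t > t₀, f t > h t :=
  stmt_3_general U hU_mono rn ri hr f h hf hh t₀ ht₀ heq
end

section
/- Let U : ℝ × ℝ → ℝ be continuous, strictly decreasing in its first argument and strictly increasing in its second. Let f, h : [0,∞) → ℝ be continuously differentiable with f'(t) = U(f(t), r_n(t)) and h'(t) = U(h(t), r_i(t)), where r_n, r_i are continuous and there exists δ > 0 with U(x, r_n(t)) ≥ U(x, r_i(t)) + δ for all x in the (bounded) range of f and h and all t. Assume f and h are bounded. Then it is impossible that h(t) > f(t) for all t ≥ 0. -/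
/-!
While `h > f`, strict antitonicity of `U` in its first argument and the gap `δ` give
`(h - f)' = U(h, rᵢ) - U(f, rₙ) ≤ U(h, rₙ) - δ - U(f, rₙ) < -δ`,
so `h - f` decreases at least linearly and becomes nonpositive in finite time.
-/

theorem sub_le_mul_of_hasDerivAt_le {g g' : ℝ → ℝ} {C : ℝ}
    (hg : ∀ t ≥ (0 : ℝ), HasDerivAt g (g' t) t) (hle : ∀ t ≥ (0 : ℝ), g' t ≤ C)
    {t : ℝ} (ht : 0 ≤ t) : g t - g 0 ≤ C * t := by
  have hderiv : ∀ s ∈ interior (Set.Ici (0 : ℝ)), deriv g s ≤ C := by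
    rw [interior_Ici]
    intro s hs
    exact (hg s hs.le).deriv ▸ hle s hs.le
  simpa using (convex_Ici 0).image_sub_le_mul_sub_of_deriv_le
    (fun s hs => (hg s hs).continuousAt.continuousWithinAt)
    (fun s hs => (hg s (interior_subset hs)).differentiableAt.differentiableWithinAt)
    hderiv 0 Set.self_mem_Ici t ht ht

theorem exists_nonpos_of_hasDerivAt_le_neg {g g' : ℝ → ℝ} {δ : ℝ} (hδ : 0 < δ)
    (hg : ∀ t ≥ (0 : ℝ), HasDerivAt g (g' t) t) (hle : ∀ t ≥ (0 : ℝ), g' t ≤ -δ) :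
    ∃ t ≥ (0 : ℝ), g t ≤ 0 := by
  refine ⟨max (g 0 / δ) 0, le_max_right _ _, ?_⟩
  have hdecay := sub_le_mul_of_hasDerivAt_le hg hle (le_max_right (g 0 / δ) 0)
  have hreach : g 0 ≤ δ * max (g 0 / δ) 0 := by
    rw [mul_max_of_nonneg _ _ hδ.le, mul_div_cancel₀ _ hδ.ne']
    exact le_max_left _ _
  linarith

theorem stmt_4_general (U : ℝ → ℝ → ℝ)
    (hU_anti : ∀ y : ℝ, StrictAnti (fun x => U x y))
    (rn ri : ℝ → ℝ)
    (f h : ℝ → ℝ)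
    (hf : ∀ t ≥ (0 : ℝ), HasDerivAt f (U (f t) (rn t)) t)
    (hh : ∀ t ≥ (0 : ℝ), HasDerivAt h (U (h t) (ri t)) t)
    (δ : ℝ) (hδ : 0 < δ)
    (hgap : ∀ t ≥ (0 : ℝ), ∀ x ∈ f '' Set.Ici 0 ∪ h '' Set.Ici 0,
      U x (rn t) ≥ U x (ri t) + δ) :
    ¬ (∀ t ≥ (0 : ℝ), h t > f t) := by
  intro hpos
  have hslope : ∀ t ≥ (0 : ℝ), U (h t) (ri t) - U (f t) (rn t) ≤ -δ := by
    intro t ht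
    have hgap_h := hgap t ht (h t) (Or.inr ⟨t, ht, rfl⟩)
    have hanti := hU_anti (rn t) (hpos t ht)
    linarith
  obtain ⟨t, ht, hnonpos⟩ := exists_nonpos_of_hasDerivAt_le_neg (g := fun t => h t - f t) hδ
    (fun t ht => (hh t ht).sub (hf t ht)) hslope
  exact (sub_pos.2 (hpos t ht)).not_ge hnonpos

theorem stmt_4 (U : ℝ → ℝ → ℝ)
    (hU_cont : Continuous (Function.uncurry U))
    (hU_anti : ∀ y : ℝ, StrictAnti (fun x => U x y))
    (hU_mono : ∀ x : ℝ, StrictMono (fun y => U x y))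
    (rn ri : ℝ → ℝ)
    (hrn : ContinuousOn rn (Set.Ici 0)) (hri : ContinuousOn ri (Set.Ici 0))
    (f h : ℝ → ℝ)
    (hf : ∀ t ≥ (0 : ℝ), HasDerivAt f (U (f t) (rn t)) t)
    (hh : ∀ t ≥ (0 : ℝ), HasDerivAt h (U (h t) (ri t)) t)
    (M : ℝ) (hbound : ∀ t ≥ (0 : ℝ), |f t| ≤ M ∧ |h t| ≤ M)
    (δ : ℝ) (hδ : 0 < δ)
    (hgap : ∀ t ≥ (0 : ℝ), ∀ x ∈ f '' Set.Ici 0 ∪ h '' Set.Ici 0,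
      U x (rn t) ≥ U x (ri t) + δ) :
    ¬ (∀ t ≥ (0 : ℝ), h t > f t) :=
  stmt_4_general U hU_anti rn ri f h hf hh δ hδ hgap
end

section
/- Let g ∈ (1,2), γ ∈ [0,1), ε ∈ (0, 1 - √((2-g)/g)), and let q = (1 + g + √((g-1)(g - 1 - εg + ε²g/2)))/(1-γ). Define τ = (ε²g/2 + ε - 2 - q(γ-1)(1-ε)) / (2(ε-1)(1 + g + (γ-1)q)). Then τ ∈ [1/2, 1]. -/
/-!
Write `B = g - 1 - εg + ε²g/2` and `s = √((g - 1)B)`. Substituting `q` collapses the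
denominator of `τ` to `-2(ε - 1)s` and the numerator to `B + (1 - ε)s`, so
`τ = 1/2 + B / (2(1 - ε)s)`. The bound on `ε` is exactly `B > 0`, giving `τ ≥ 1/2`, and
`(1 - ε)²(g - 1) - B = ε(2 - g)(1 - ε/2) ≥ 0` gives `B ≤ (1 - ε)s`, i.e. `τ ≤ 1`.
-/

lemma lt_sq_of_lt_one_sub_sqrt {x ε : ℝ} (h : ε < 1 - √x) : x < (1 - ε) ^ 2 :=
  (Real.sqrt_lt' (by linarith [Real.sqrt_nonneg x])).mp (by linarith)

lemma le_mul_sqrt_mul_of_le_sq_mul {a b c : ℝ} (hb : 0 ≤ b) (hc : 0 ≤ c)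
    (h : b ≤ c ^ 2 * a) : b ≤ c * √(a * b) :=
  calc b = √(b * b) := (Real.sqrt_mul_self hb).symm
    _ ≤ √(c ^ 2 * (a * b)) := Real.sqrt_le_sqrt (by nlinarith)
    _ = c * √(a * b) := by rw [Real.sqrt_mul (sq_nonneg c), Real.sqrt_sq hc]

lemma add_div_two_mul_mem_Icc {b d : ℝ} (hb : 0 ≤ b) (hd : 0 < d) (hbd : b ≤ d) :
    (b + d) / (2 * d) ∈ Set.Icc (1 / 2 : ℝ) 1 := by
  constructor
  · rw [le_div_iff₀ (by positivity)]; linarith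
  · rw [div_le_one (by positivity)]; linarith

theorem stmt_8 (g γ ε : ℝ)
    (hg : g ∈ Set.Ioo (1 : ℝ) 2) (hγ : γ ∈ Set.Ico (0 : ℝ) 1)
    (hε : ε ∈ Set.Ioo (0 : ℝ) (1 - Real.sqrt ((2 - g) / g)))
    (q : ℝ)
    (hq : q = (1 + g + Real.sqrt ((g - 1) * (g - 1 - ε * g + ε ^ 2 * g / 2))) / (1 - γ))
    (τ : ℝ)
    (hτ : τ = (ε ^ 2 * g / 2 + ε - 2 - q * (γ - 1) * (1 - ε)) /
        (2 * (ε - 1) * (1 + g + (γ - 1) * q))) :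
    τ ∈ Set.Icc (1 / 2 : ℝ) 1 := by
  obtain ⟨hg1, hg2⟩ := hg
  obtain ⟨hε0, hεu⟩ := hε
  have hε1 : ε < 1 := by linarith [Real.sqrt_nonneg ((2 - g) / g)]
  set B := g - 1 - ε * g + ε ^ 2 * g / 2 with hB_def
  set s := √((g - 1) * B)
  have hB : 0 < B := by
    have h := lt_sq_of_lt_one_sub_sqrt hεu
    rw [div_lt_iff₀ (by linarith)] at h
    nlinarith
  have hBle : B ≤ (1 - ε) ^ 2 * (g - 1) := by
    nlinarith [mul_nonneg (mul_nonneg hε0.le (by linarith : (0 : ℝ) ≤ 2 - g))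
      (by linarith : (0 : ℝ) ≤ 1 - ε / 2)]
  have hs : 0 < s := Real.sqrt_pos.mpr (mul_pos (by linarith) hB)
  have hqs : q * (1 - γ) = 1 + g + s := by
    rw [hq, div_mul_cancel₀ _ (by linarith [hγ.2])]
  have hτ' : τ = (B + (1 - ε) * s) / (2 * ((1 - ε) * s)) := by
    rw [hτ]
    congr 1
    · linear_combination (1 - ε) * hqs - hB_def
    · linear_combination 2 * (1 - ε) * hqs
  rw [hτ']
  exact add_div_two_mul_mem_Icc hB.le (by nlinarith)
    (le_mul_sqrt_mul_of_le_sq_mul hB.le (by linarith) hBle)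
end

section
/- If x, y : [0,1] → ℝ² are continuous with x₁(t) ≥ 0 and y₁(t) ≤ 0 for all t, x(1) = (0, -a) with a > 0 and y(0) = (0, b) with b > 0, then there exist t ∈ [0,1] and α ∈ [0,1] with α·x(t) + (1-α)·y(t) = (0,0). -/
open Set Filter Topology

lemma aux_eps (x y : ℝ → ℝ × ℝ)
    (hx : ContinuousOn x (Set.Icc 0 1)) (hy : ContinuousOn y (Set.Icc 0 1))
    (hx1 : ∀ t ∈ Set.Icc (0 : ℝ) 1, 0 ≤ (x t).1)
    (hy1 : ∀ t ∈ Set.Icc (0 : ℝ) 1, (y t).1 ≤ 0)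
    (a b : ℝ) (ha : 0 < a) (hb : 0 < b)
    (hxend : x 1 = (0, -a)) (hystart : y 0 = (0, b))
    (ε : ℝ) (hε : 0 < ε) :
    ∃ t ∈ Set.Icc (0:ℝ) 1, ∃ α ∈ Set.Icc (0:ℝ) 1,
      α * (x t).2 + (1 - α) * (y t).2 = 0 ∧
      α * ((x t).1 + ε * (1 - t)) + (1 - α) * ((y t).1 - ε * t) = 0 := by
  set d : ℝ → ℝ := fun t => (x t).1 - (y t).1 + ε with hd
  have hdpos : ∀ t ∈ Icc (0:ℝ) 1, 0 < d t := by
    intro t ht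
    have := hx1 t ht; have := hy1 t ht
    simp only [hd]; linarith
  set A : ℝ → ℝ := fun t => (ε * t - (y t).1) / d t with hA
  set h : ℝ → ℝ := fun t => A t * (x t).2 + (1 - A t) * (y t).2 with hh
  have hAcont : ContinuousOn A (Icc 0 1) := by
    apply ContinuousOn.div
    · exact (continuousOn_const.mul continuousOn_id).sub hy.fst
    · exact (hx.fst.sub hy.fst).add continuousOn_const
    · intro t ht; exact (hdpos t ht).ne'
  have hhcont : ContinuousOn h (Icc 0 1) := by
    exact (hAcont.mul hx.snd).add ((continuousOn_const.sub hAcont).mul hy.snd)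
  have hy00 : (y 0).1 = 0 := by rw [hystart]
  have hy02 : (y 0).2 = b := by rw [hystart]
  have hx10 : (x 1).1 = 0 := by rw [hxend]
  have hx12 : (x 1).2 = -a := by rw [hxend]
  have h0 : h 0 = b := by
    have : A 0 = 0 := by simp [hA, hy00]
    simp [hh, this, hy02]
  have h1 : h 1 = -a := by
    have hd1 : d 1 = ε - (y 1).1 := by simp [hd, hx10]; ring
    have hne : ε - (y 1).1 ≠ 0 := by
      have := hy1 1 (by constructor <;> norm_num); linarith
    have : A 1 = 1 := by
      simp only [hA, hd1, mul_one]
      exact div_self hne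
    simp [hh, this, hx12]
  have hiv : (0:ℝ) ∈ h '' Icc 0 1 := by
    apply intermediate_value_Icc' (by norm_num : (0:ℝ) ≤ 1) hhcont
    rw [h0, h1]; constructor <;> linarith
  obtain ⟨t, ht, hht⟩ := hiv
  refine ⟨t, ht, A t, ?_, ?_, ?_⟩
  · have hnum : 0 ≤ ε * t - (y t).1 := by
      have := hy1 t ht
      have : 0 ≤ ε * t := mul_nonneg hε.le ht.1
      nlinarith [hy1 t ht]
    constructor
    · exact div_nonneg hnum (hdpos t ht).le
    · rw [div_le_one (hdpos t ht)]
      have hxt := hx1 t ht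
      have : ε * t ≤ ε := by nlinarith [ht.2]
      simp only [hd]; linarith
  · exact hht
  · have hdne := (hdpos t ht).ne'
    simp only [hA]
    field_simp
    ring


open Set Filter Topology

theorem stmt_10 (x y : ℝ → ℝ × ℝ)
    (hx : ContinuousOn x (Set.Icc 0 1)) (hy : ContinuousOn y (Set.Icc 0 1))
    (hx1 : ∀ t ∈ Set.Icc (0 : ℝ) 1, 0 ≤ (x t).1)
    (hy1 : ∀ t ∈ Set.Icc (0 : ℝ) 1, (y t).1 ≤ 0)
    (a b : ℝ) (ha : 0 < a) (hb : 0 < b)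
    (hxend : x 1 = (0, -a)) (hystart : y 0 = (0, b)) :
    ∃ t ∈ Set.Icc (0 : ℝ) 1, ∃ α ∈ Set.Icc (0 : ℝ) 1,
      α • x t + (1 - α) • y t = (0, 0) := by
  -- choose for each n a solution of the (1/(n+1))-perturbed problem
  have key : ∀ n : ℕ, ∃ p : ℝ × ℝ, p ∈ Icc (0:ℝ) 1 ×ˢ Icc (0:ℝ) 1 ∧
      p.2 * (x p.1).2 + (1 - p.2) * (y p.1).2 = 0 ∧
      |p.2 * (x p.1).1 + (1 - p.2) * (y p.1).1| ≤ 1 / (n + 1) := by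
    intro n
    obtain ⟨t, ht, α, hα, h2, h1⟩ := aux_eps x y hx hy hx1 hy1 a b ha hb hxend hystart
      (1 / (n + 1)) (by positivity)
    refine ⟨(t, α), ⟨ht, hα⟩, h2, ?_⟩
    have heq : α * (x t).1 + (1 - α) * (y t).1
        = (1 / (n+1)) * ((1 - α) * t - α * (1 - t)) := by linarith [h1]; 
    rw [heq, abs_mul]
    have h1n : |(1:ℝ) / (n+1)| = 1 / (n+1) := abs_of_pos (by positivity)
    rw [h1n]
    have : |(1 - α) * t - α * (1 - t)| ≤ 1 := by
      rw [abs_le]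
      constructor <;> nlinarith [ht.1, ht.2, hα.1, hα.2]
    nlinarith [this, (by positivity : (0:ℝ) < 1/(n+1))]
  choose P hPK hP2 hP1 using key
  have hKcpt : IsCompact (Icc (0:ℝ) 1 ×ˢ Icc (0:ℝ) 1) := isCompact_Icc.prod isCompact_Icc
  obtain ⟨p, hpK, φ, hφ, hconv⟩ := hKcpt.tendsto_subseq hPK
  set F : ℝ × ℝ → ℝ × ℝ := fun q => q.2 • x q.1 + (1 - q.2) • y q.1 with hF
  have hFcont : ContinuousOn F (Icc (0:ℝ) 1 ×ˢ Icc (0:ℝ) 1) := by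
    apply ContinuousOn.add
    · exact ContinuousOn.smul continuousOn_snd
        (hx.comp continuousOn_fst (fun q hq => hq.1))
    · exact ContinuousOn.smul (continuousOn_const.sub continuousOn_snd)
        (hy.comp continuousOn_fst (fun q hq => hq.1))
  have htend1 : Tendsto (fun n => F (P (φ n))) atTop (𝓝 (F p)) := by
    apply (hFcont.continuousWithinAt hpK).tendsto.comp
    exact tendsto_nhdsWithin_of_tendsto_nhds_of_eventually_within _ hconv
      (Eventually.of_forall fun n => hPK (φ n))
  have htend2 : Tendsto (fun n => F (P (φ n))) atTop (𝓝 ((0:ℝ), (0:ℝ))) := by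
    have hfst : Tendsto (fun n => (F (P (φ n))).1) atTop (𝓝 0) := by
      refine squeeze_zero_norm (a := fun n => 1 / ((φ n : ℝ) + 1)) (fun n => ?_) ?_
      · have := hP1 (φ n)
        simpa [hF, Prod.smul_def, smul_eq_mul] using this
      · have : Tendsto (fun n : ℕ => 1 / ((n : ℝ) + 1)) atTop (𝓝 0) :=
          tendsto_one_div_add_atTop_nhds_zero_nat
        exact this.comp hφ.tendsto_atTop
    have hsnd : Tendsto (fun n => (F (P (φ n))).2) atTop (𝓝 0) := by
      have : ∀ n, (F (P (φ n))).2 = 0 := by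
        intro n
        have := hP2 (φ n)
        simpa [hF, Prod.smul_def, smul_eq_mul] using this
      simp only [this]; exact tendsto_const_nhds
    rw [Prod.tendsto_iff]
    exact ⟨hfst, hsnd⟩
  have hFp : F p = (0, 0) := tendsto_nhds_unique htend1 htend2
  exact ⟨p.1, hpK.1, p.2, hpK.2, hFp⟩
end

section
/- Consider the symmetric fluid dynamics of greedy Q-learning (ε → 0 limit, γ = 0) in the two-price Bertrand game: in the region where both firms prefer price 2, dQ_2/dt = α(1 - Q_2) and dQ_{0.5}/dt = 0; in the region where both prefer 0.5, dQ_{0.5}/dt = α(5/8 - Q_{0.5}) and dQ_2/dt = 0. Then any trajectory starting with Q_2(0) > Q_{0.5}(0) and Q_2(0) ≤ 1, Q_{0.5}(0) < 1 remains forever in the region Q_2 > Q_{0.5} if Q_{0.5}(0) < 1, converging to Q_2 = 1 (the collusive outcome); any trajectory starting with Q_{0.5}(0) > Q_2(0) and Q_2(0) < 5/8 converges to Q_{0.5} = 5/8 (the competitive outcome). -/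
/-! Along the greedy action's dynamics `f' = α (c - f)` the quantity `(f t - c) e^{α t}` is
constant, so `f` moves monotonically from `f 0` towards `c`, while the other estimate `g` stays
frozen at `g 0`. When both `f 0` and `c` exceed `g 0`, every convex combination of them does too,
so `f` can never fall to `g`: the greedy region is invariant and `f t → c`. This applies to price 2
with `c = 1` when `Q₀.₅(0) < 1`, and to price 0.5 with `c = 5/8` when `Q₂(0) < 5/8`. -/

open Filter Set Real

theorem forall_ge_of_isOpen {P : ℝ → Prop} {a : ℝ} (hP : IsOpen {t | P t})
    (step : ∀ T ≥ a, (∀ s ∈ Ico a T, P s) → P T) : ∀ t ≥ a, P t := by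
  by_contra! hfail
  set S : Set ℝ := Ici a ∩ {t | P t}ᶜ
  have hS_closed : IsClosed S := isClosed_Ici.inter hP.isClosed_compl
  have hS_ne : S.Nonempty := let ⟨t, ht, hPt⟩ := hfail; ⟨t, ht, hPt⟩
  have hS_bdd : BddBelow S := ⟨a, fun _ hs => hs.1⟩
  obtain ⟨ha_le, hnot⟩ : sInf S ∈ S := hS_closed.csInf_mem hS_ne hS_bdd
  refine hnot (step _ ha_le fun s hs => ?_)
  by_contra hPs
  exact (csInf_le hS_bdd ⟨hs.1, hPs⟩).not_gt hs.2

theorem eq_of_hasDerivAt_relaxation {f : ℝ → ℝ} {α c T : ℝ} (hT : 0 ≤ T)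
    (hf : ContinuousOn f (Icc 0 T)) (hd : ∀ t ∈ Ico 0 T, HasDerivAt f (α * (c - f t)) t) :
    f T = c + (f 0 - c) * exp (-(α * T)) := by
  set F : ℝ → ℝ := fun t => (f t - c) * exp (α * t)
  have hF_cont : ContinuousOn F (Icc 0 T) :=
    (hf.sub continuousOn_const).mul (continuous_exp.comp (continuous_const_mul α)).continuousOn
  have hF_deriv : ∀ t ∈ Ico 0 T, HasDerivAt F 0 t := by
    intro t ht
    have hexp : HasDerivAt (fun t => exp (α * t)) (exp (α * t) * α) t :=
      ((hasDerivAt_id t).const_mul α).exp.congr_deriv (by simp)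
    exact (((hd t ht).sub_const c).mul hexp).congr_deriv (by ring)
  have hF_eq : F T = F 0 :=
    constant_of_has_deriv_right_zero hF_cont (fun t ht => (hF_deriv t ht).hasDerivWithinAt)
      T ⟨hT, le_rfl⟩
  simp only [F, mul_zero, exp_zero, mul_one] at hF_eq
  rw [exp_neg, ← hF_eq, mul_inv_cancel_right₀ (exp_pos _).ne']
  ring

theorem tendsto_relaxation {α : ℝ} (hα : 0 < α) (a c : ℝ) :
    Tendsto (fun t => c + (a - c) * exp (-(α * t))) atTop (nhds c) := by
  have hdecay : Tendsto (fun t => exp (-(α * t))) atTop (nhds 0) :=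
    tendsto_exp_atBot.comp (tendsto_neg_atTop_atBot.comp (tendsto_id.const_mul_atTop hα))
  simpa using tendsto_const_nhds.add (hdecay.const_mul (a - c))

theorem greedy_region_invariant_and_tendsto {α c : ℝ} (hα : 0 < α) {f g : ℝ → ℝ}
    (hf : Continuous f) (hg : Continuous g)
    (hd : ∀ t ≥ (0 : ℝ), f t > g t → HasDerivAt f (α * (c - f t)) t ∧ HasDerivAt g 0 t)
    (h0 : g 0 < f 0) (hgc : g 0 < c) :
    (∀ t ≥ (0 : ℝ), f t > g t) ∧ Tendsto f atTop (nhds c) := by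
  have hformula : ∀ T ≥ (0 : ℝ), (∀ s ∈ Ico 0 T, f s > g s) →
      f T = c + (f 0 - c) * exp (-(α * T)) ∧ g T = g 0 := fun T hT hreg =>
    ⟨eq_of_hasDerivAt_relaxation hT hf.continuousOn fun s hs => (hd s hs.1 (hreg s hs)).1,
      constant_of_has_deriv_right_zero hg.continuousOn
        (fun s hs => (hd s hs.1 (hreg s hs)).2.hasDerivWithinAt) T ⟨hT, le_rfl⟩⟩
  have hinv : ∀ t ≥ (0 : ℝ), f t > g t := by
    refine forall_ge_of_isOpen (isOpen_lt hg hf) fun T hT hreg => ?_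
    obtain ⟨hfT, hgT⟩ := hformula T hT hreg
    have he_pos : 0 < exp (-(α * T)) := exp_pos _
    have he_le : exp (-(α * T)) ≤ 1 := exp_le_one_iff.mpr (by nlinarith)
    show g T < f T
    rw [hfT, hgT]
    nlinarith
  refine ⟨hinv, (tendsto_relaxation hα (f 0) c).congr' ?_⟩
  filter_upwards [eventually_ge_atTop 0] with T hT
  exact ((hformula T hT fun s hs => hinv s hs.1).1).symm

theorem stmt_15 (α : ℝ) (hα : 0 < α) (Q2 Q05 : ℝ → ℝ)
    (hcont2 : Continuous Q2) (hcont05 : Continuous Q05)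
    -- in the region where both firms prefer the high price 2
    (hhigh : ∀ t ≥ (0 : ℝ), Q2 t > Q05 t →
      HasDerivAt Q2 (α * (1 - Q2 t)) t ∧ HasDerivAt Q05 0 t)
    -- in the region where both firms prefer the low price 0.5
    (hlow : ∀ t ≥ (0 : ℝ), Q05 t > Q2 t →
      HasDerivAt Q05 (α * (5 / 8 - Q05 t)) t ∧ HasDerivAt Q2 0 t) :
    -- collusive region of attraction
    ((Q2 0 > Q05 0 ∧ Q2 0 ≤ 1 ∧ Q05 0 < 1) →
      (∀ t ≥ (0 : ℝ), Q2 t > Q05 t) ∧ Tendsto Q2 atTop (nhds 1)) ∧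
    -- competitive region of attraction
    ((Q05 0 > Q2 0 ∧ Q2 0 < 5 / 8) →
      Tendsto Q05 atTop (nhds (5 / 8))) := by
  constructor
  · rintro ⟨hgreedy, -, hbelow⟩
    exact greedy_region_invariant_and_tendsto hα hcont2 hcont05 hhigh hgreedy hbelow
  · rintro ⟨hgreedy, hbelow⟩
    exact (greedy_region_invariant_and_tendsto hα hcont05 hcont2 hlow hgreedy hbelow).2
end
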